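/- Let (A B; B† C) be a positive semidefinite block matrix with A, C square blocks. Then Tr(A)·Tr(C) ≥ (Tr√(B†B))², i.e., the product of the traces of the diagonal blocks is at least the square of the trace norm of the off-diagonal block B. -/

import Mathlib

/-!
Let `|B| = √(BᴴB)` and write `B = K |B|` with `K = B |B|⁺` a partial isometry, so that
`Tr |B| = Tr (Kᴴ B)`. Compressing the block matrix by the columns `(t K; 1)` gives a quadratic
`t² Tr (KᴴAK) + 2t Re Tr (KᴴB) + Tr C ≥ 0` for all real `t`, whose discriminant yields
`(Tr |B|)² ≤ Tr (KᴴAK) · Tr C`. Finally `Tr (KᴴAK) ≤ Tr A` because `KKᴴ` is an orthogonal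
projection.
-/

open Matrix BigOperators ComplexOrder
open scoped Classical

/-- The positive semidefinite square root of a matrix (0 if the matrix is not PSD). -/
noncomputable def msqrt {n : ℕ} (A : Matrix (Fin n) (Fin n) ℂ) : Matrix (Fin n) (Fin n) ℂ :=
  if h : A.PosSemidef then
    (h.1.eigenvectorUnitary : Matrix (Fin n) (Fin n) ℂ) *
      diagonal ((↑) ∘ (√·) ∘ h.1.eigenvalues) *
      (star h.1.eigenvectorUnitary : Matrix (Fin n) (Fin n) ℂ)
  else 0

namespace Matrix

variable {𝕜 m n : Type*} [RCLike 𝕜]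

lemma PosSemidef.toBlocks₁₁ {M : Matrix (m ⊕ n) (m ⊕ n) 𝕜} (hM : M.PosSemidef) :
    M.toBlocks₁₁.PosSemidef :=
  hM.submatrix Sum.inl

lemma PosSemidef.toBlocks₂₂ {M : Matrix (m ⊕ n) (m ⊕ n) 𝕜} (hM : M.PosSemidef) :
    M.toBlocks₂₂.PosSemidef :=
  hM.submatrix Sum.inr

variable [Fintype m] [Fintype n]

lemma PosSemidef.re_trace_nonneg {A : Matrix n n 𝕜} (hA : A.PosSemidef) :
    0 ≤ RCLike.re A.trace :=
  (RCLike.nonneg_iff.mp hA.trace_nonneg).1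

lemma PosSemidef.re_trace_conjTranspose_mul_mul_le {A : Matrix m m 𝕜} (hA : A.PosSemidef)
    {K : Matrix m n 𝕜} (hK : K * Kᴴ * K = K) :
    RCLike.re (Kᴴ * A * K).trace ≤ RCLike.re A.trace := by
  set P := 1 - K * Kᴴ
  have hP : P * Pᴴ = P := by
    simp only [P, conjTranspose_sub, conjTranspose_one, conjTranspose_mul,
      conjTranspose_conjTranspose, sub_mul, mul_sub, one_mul, mul_one, ← Matrix.mul_assoc, hK]
    abel
  have hgap : A.trace - (Kᴴ * A * K).trace = (Pᴴ * A * P).trace := by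
    rw [trace_mul_cycle, trace_mul_cycle Pᴴ, hP, sub_mul, one_mul, trace_sub, trace_mul_cycle]
  have hgap_nonneg := (hA.conjTranspose_mul_mul_same P).re_trace_nonneg
  rw [← hgap, map_sub] at hgap_nonneg
  linarith

lemma PosSemidef.sq_re_trace_conjTranspose_mul_le {A : Matrix m m 𝕜} {B : Matrix m n 𝕜}
    {C : Matrix n n 𝕜} (h : (fromBlocks A B Bᴴ C).PosSemidef) (K : Matrix m n 𝕜) :
    RCLike.re (Kᴴ * B).trace ^ 2 ≤ RCLike.re (Kᴴ * A * K).trace * RCLike.re C.trace := by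
  have hquad : ∀ t : ℝ, 0 ≤ RCLike.re (Kᴴ * A * K).trace * (t * t) +
      2 * RCLike.re (Kᴴ * B).trace * t + RCLike.re C.trace := by
    intro t
    have hN := (h.conjTranspose_mul_mul_same (fromRows ((t : 𝕜) • K) 1)).re_trace_nonneg
    rw [conjTranspose_fromRows_eq_fromCols_conjTranspose, Matrix.mul_assoc,
      fromBlocks_mul_fromRows, fromCols_mul_fromRows] at hN
    simp only [conjTranspose_smul, RCLike.star_def, RCLike.conj_ofReal, conjTranspose_one,
      Matrix.mul_one, Matrix.one_mul, Matrix.mul_add, Matrix.mul_smul, Matrix.smul_mul, trace_add,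
      trace_smul, smul_eq_mul, map_add, RCLike.re_ofReal_mul, ← Matrix.mul_assoc] at hN
    have hBK : RCLike.re (Bᴴ * K).trace = RCLike.re (Kᴴ * B).trace := by
      rw [show Bᴴ * K = (Kᴴ * B)ᴴ by simp, trace_conjTranspose, RCLike.star_def, RCLike.conj_re]
    rw [hBK] at hN
    linarith
  have hdisc := discrim_le_zero hquad
  unfold discrim at hdisc
  linarith

lemma exists_partialIsometry_conjTranspose_mul_eq_cfc_sqrt [DecidableEq n] (B : Matrix m n 𝕜) :
    ∃ K : Matrix m n 𝕜, K * Kᴴ * K = K ∧ Kᴴ * B = cfc Real.sqrt (Bᴴ * B) := by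
  set S := Bᴴ * B
  have hS : IsSelfAdjoint S := (posSemidef_conjTranspose_mul_self B).isHermitian
  have hcont (f : ℝ → ℝ) : ContinuousOn f (spectrum ℝ S) := S.finite_real_spectrum.continuousOn f
  -- `(√x)⁻¹ = 0` for `x ≤ 0`, so `G` is the pseudo-inverse of `√S`.
  set G := cfc (fun x => (√x)⁻¹) S
  have hG : Gᴴ = G := (cfc_predicate _ S : IsSelfAdjoint G)
  have hGS : G * S = cfc Real.sqrt S := by
    conv_lhs => rw [← cfc_id' ℝ S hS]
    rw [← cfc_mul _ _ S (hcont _) (hcont _)]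
    exact cfc_congr fun x _ => by simp only [inv_mul_eq_div, Real.div_sqrt]
  have hGGSG : G * (G * S) * G = G := by
    rw [hGS, ← cfc_mul _ _ S (hcont _) (hcont _), ← cfc_mul _ _ S (hcont _) (hcont _)]
    exact cfc_congr fun x _ => by simpa using mul_inv_mul_cancel (√x)⁻¹
  refine ⟨B * G, ?_, ?_⟩
  · rw [conjTranspose_mul, hG]
    simpa only [S, Matrix.mul_assoc] using congr_arg (B * ·) hGGSG
  · rw [conjTranspose_mul, hG, Matrix.mul_assoc, hGS]

end Matrix

lemma msqrt_eq_cfc_sqrt {n : ℕ} {A : Matrix (Fin n) (Fin n) ℂ} (hA : A.PosSemidef) :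
    msqrt A = cfc Real.sqrt A := by
  rw [msqrt, dif_pos hA, hA.1.cfc_eq, IsHermitian.cfc, Unitary.conjStarAlgAut_apply]
  rfl

theorem stmt_5 {p q : ℕ} (A : Matrix (Fin p) (Fin p) ℂ) (B : Matrix (Fin p) (Fin q) ℂ)
    (C : Matrix (Fin q) (Fin q) ℂ)
    (h : (Matrix.fromBlocks A B Bᴴ C).PosSemidef) :
    A.trace.re * C.trace.re ≥ ((msqrt (Bᴴ * B)).trace.re) ^ 2 := by
  have hA : A.PosSemidef := by simpa using h.toBlocks₁₁
  have hC : 0 ≤ C.trace.re := by simpa using h.toBlocks₂₂.re_trace_nonneg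
  obtain ⟨K, hK, hKB⟩ := B.exists_partialIsometry_conjTranspose_mul_eq_cfc_sqrt
  have hKAK := hA.re_trace_conjTranspose_mul_mul_le hK
  have hCS := h.sq_re_trace_conjTranspose_mul_le K
  rw [msqrt_eq_cfc_sqrt (posSemidef_conjTranspose_mul_self B), ← hKB]
  simp only [RCLike.re_to_complex] at hKAK hCS
  exact hCS.trans (mul_le_mul_of_nonneg_right hKAK hC)
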